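/- arXiv:1901.01254 — 2 statements merged into one kernel-verified Lean document; each statement's English description precedes it below -/
import Mathlib

section
/- For every positive integer M and every family of real targets a_{m,p} (m = 1,...,M, p = 0,1,2), there exists a C²-function W on [0,h] with W(0) = W(h) = W'(0) = W'(h) = 0 such that ∫_0^h y^p exp(-m y) W(y) dy = a_{m,p} for all m and p. -/
open Real intervalIntegral

/-!
Take `W = φ · g` with the weight `φ(y) = (y(h - y))²`, which vanishes to second order at both
endpoints, and `g = ∑ c_{m,p} y^p e^{-(m+1)y}` a combination of the kernels themselves. The moments
of `W` are then `G c`, where `G` is the Gram matrix of the kernels for the weighted inner product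
`⟨u, v⟩ = ∫₀ʰ u v φ`. The kernels are linearly independent on `(0, h)`: they are analytic, and a
vanishing combination `∑ P_m(y) e^{-(m+1)y}` with polynomials `P_m` forces the polynomial attached
to the slowest decaying exponential to tend to `0` at infinity. So `G` is positive definite,
hence invertible, and `c = G⁻¹ a` does the job.
-/

open Set Filter Topology MeasureTheory Polynomial Asymptotics

theorem Polynomial.tendsto_eval_mul_exp_atTop_nhds_zero (P : ℝ[X]) {r : ℝ} (hr : r < 0) :
    Tendsto (fun y => P.eval y * exp (r * y)) atTop (𝓝 0) := by
  have hP : (fun y => P.eval y) =O[atTop] fun y : ℝ => y ^ P.natDegree := by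
    simpa using P.isBigO_atTop_of_degree_le (X ^ P.natDegree) (by simp [degree_le_natDegree])
  have := (hP.trans_isLittleO (isLittleO_pow_exp_pos_mul_atTop P.natDegree (neg_pos.2 hr)))
    |>.tendsto_div_nhds_zero
  simpa [div_eq_mul_inv, ← exp_neg] using this

theorem Polynomial.eq_zero_of_forall_sum_eval_mul_exp_eq_zero {ι : Type*} [DecidableEq ι]
    {r : ι → ℝ} (hr : Function.Injective r) (P : ι → ℝ[X]) (s : Finset ι)
    (hsum : ∀ y, ∑ i ∈ s, (P i).eval y * exp (r i * y) = 0) : ∀ i ∈ s, P i = 0 := by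
  induction s using Finset.induction_on_max_value r with
  | empty => simp
  | insert a s has hmax ih =>
    have hPa_eval : ∀ y, (P a).eval y = -∑ i ∈ s, (P i).eval y * exp ((r i - r a) * y) := by
      intro y
      have hy := hsum y
      rw [Finset.sum_insert has] at hy
      simp_rw [sub_mul, exp_sub, ← mul_div_assoc, ← Finset.sum_div,
        eq_neg_of_add_eq_zero_right hy]
      field_simp
    have hPa : P a = 0 := by
      have hlim : Tendsto (fun y => (P a).eval y) atTop (𝓝 0) := by
        simp_rw [hPa_eval]
        simpa using (tendsto_finsetSum s fun i hi => (P i).tendsto_eval_mul_exp_atTop_nhds_zero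
          (sub_neg.2 ((hmax i hi).lt_of_ne (hr.ne (ne_of_mem_of_not_mem hi has))))).neg
      exact leadingCoeff_eq_zero.1 ((tendsto_nhds_iff _).1 hlim).1
    have hs : ∀ i ∈ s, P i = 0 := ih fun y => by simpa [Finset.sum_insert has, hPa] using hsum y
    exact Finset.forall_mem_insert _ _ _ |>.2 ⟨hPa, hs⟩

theorem linearIndependent_pow_mul_exp {ι : Type*} [Fintype ι] {r : ι → ℝ}
    (hr : Function.Injective r) (n : ℕ) :
    LinearIndependent ℝ fun i : ι × Fin n => fun y : ℝ => y ^ (i.2 : ℕ) * exp (r i.1 * y) := by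
  classical
  rw [Fintype.linearIndependent_iff]
  intro g hg ⟨i, p⟩
  let P : ι → ℝ[X] := fun i => ∑ q : Fin n, monomial q (g (i, q))
  have hP : ∀ i ∈ Finset.univ, P i = 0 := by
    refine eq_zero_of_forall_sum_eval_mul_exp_eq_zero hr P _ fun y => ?_
    simpa [P, eval_finsetSum, Fintype.sum_prod_type, Finset.sum_mul, mul_assoc]
      using congrFun hg y
  simpa [P, finsetSum_coeff, coeff_monomial, Fin.val_inj]
    using congrArg (coeff · p) (hP i (Finset.mem_univ i))

theorem LinearIndependent.domRestrict_of_analyticOnNhd {ι 𝕜 E : Type*}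
    [NontriviallyNormedField 𝕜] [PreconnectedSpace 𝕜] [NormedAddCommGroup E] [NormedSpace 𝕜 E]
    {f : ι → 𝕜 → E} (hli : LinearIndependent 𝕜 f) (hf : ∀ i, AnalyticOnNhd 𝕜 (f i) univ)
    {U : Set 𝕜} (hU : IsOpen U) (hne : U.Nonempty) :
    LinearIndependent 𝕜 fun i => U.domRestrict (f i) := by
  rw [linearIndependent_iff'] at hli ⊢
  intro s g hg
  refine hli s g ?_
  obtain ⟨z, hz⟩ := hne
  have hvanish : (∑ i ∈ s, g i • f i) =ᶠ[𝓝 z] 0 := by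
    filter_upwards [hU.mem_nhds hz] with y hy
    simpa [domRestrict_apply] using congrFun hg ⟨y, hy⟩
  funext y
  exact (Finset.analyticOnNhd_sum s fun i _ => (hf i).const_smul)
    |>.eqOn_zero_of_preconnected_of_eventuallyEq_zero isPreconnected_univ (mem_univ z) hvanish
    (mem_univ y)

theorem Continuous.intervalIntegral_pos_of_nonneg_of_pos {f : ℝ → ℝ} {a b y₀ : ℝ}
    (hf : Continuous f) (hnonneg : ∀ y ∈ Ioo a b, 0 ≤ f y) (hy₀ : y₀ ∈ Ioo a b) (hpos : 0 < f y₀) :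
    0 < ∫ y in a..b, f y := by
  rw [integral_of_le (hy₀.1.trans hy₀.2).le, integral_Ioc_eq_integral_Ioo,
    setIntegral_pos_iff_support_of_nonneg_ae (ae_restrict_of_forall_mem measurableSet_Ioo hnonneg)
      ((hf.integrableOn_Icc).mono_set Ioo_subset_Icc_self)]
  exact (hf.isOpen_support.inter isOpen_Ioo).measure_pos volume ⟨y₀, hpos.ne', hy₀⟩

theorem deriv_fun_sq_mul_eq_zero {𝕜 : Type*} [NontriviallyNormedField 𝕜] {q g : 𝕜 → 𝕜} {x : 𝕜}
    (hq : DifferentiableAt 𝕜 q x) (hg : DifferentiableAt 𝕜 g x) (hqx : q x = 0) :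
    deriv (fun y => q y ^ 2 * g y) x = 0 := by
  rw [deriv_fun_mul (hq.fun_pow 2) hg, deriv_fun_pow hq]
  simp [hqx]

section WeightedGram

open Matrix

variable {ι : Type*} {a b : ℝ} {φ : ℝ → ℝ} {k : ι → ℝ → ℝ}

noncomputable def weightedGram (a b : ℝ) (φ : ℝ → ℝ) (k : ι → ℝ → ℝ) : Matrix ι ι ℝ :=
  Matrix.of fun i j => ∫ y in a..b, k i y * φ y * k j y

theorem weightedGram_apply (i j : ι) :
    weightedGram a b φ k i j = ∫ y in a..b, k i y * φ y * k j y :=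
  rfl

variable [Fintype ι]

theorem weightedGram_mulVec (hφ : Continuous φ) (hk : ∀ i, Continuous (k i)) (c : ι → ℝ)
    (j : ι) : (weightedGram a b φ k *ᵥ c) j = ∫ y in a..b, k j y * (φ y * ∑ i, c i * k i y) := by
  have hint : ∀ i ∈ Finset.univ,
      IntervalIntegrable (fun y => k j y * (φ y * (c i * k i y))) volume a b :=
    fun i _ => (Continuous.intervalIntegrable (by fun_prop) _ _)
  simp_rw [mulVec, dotProduct, weightedGram_apply, Finset.mul_sum]
  rw [intervalIntegral.integral_finsetSum hint]
  refine Finset.sum_congr rfl fun i _ => ?_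
  rw [← intervalIntegral.integral_mul_const]
  congr 1 with y
  ring

theorem dotProduct_weightedGram_mulVec (hφ : Continuous φ) (hk : ∀ i, Continuous (k i))
    (c : ι → ℝ) :
    c ⬝ᵥ (weightedGram a b φ k *ᵥ c) = ∫ y in a..b, φ y * (∑ i, c i * k i y) ^ 2 := by
  have hint : ∀ j ∈ Finset.univ,
      IntervalIntegrable (fun y => c j * (k j y * (φ y * ∑ i, c i * k i y))) volume a b :=
    fun j _ => (Continuous.intervalIntegrable (by fun_prop) _ _)
  simp_rw [dotProduct, weightedGram_mulVec hφ hk, ← intervalIntegral.integral_const_mul]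
  rw [← intervalIntegral.integral_finsetSum hint]
  congr 1 with y
  simp_rw [← mul_assoc, ← Finset.sum_mul]
  ring

theorem posDef_weightedGram (hφ : Continuous φ) (hφpos : ∀ y ∈ Ioo a b, 0 < φ y)
    (hk : ∀ i, Continuous (k i))
    (hli : LinearIndependent ℝ fun i => (Ioo a b).domRestrict (k i)) :
    (weightedGram a b φ k).PosDef := by
  refine .of_dotProduct_mulVec_pos (.ext fun i j => ?_) fun c hc => ?_
  · rw [star_trivial, weightedGram_apply, weightedGram_apply]
    congr 1 with y
    ring
  · obtain ⟨y₀, hy₀, hne⟩ : ∃ y ∈ Ioo a b, ∑ i, c i * k i y ≠ 0 := by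
      contrapose! hc
      funext i
      refine Fintype.linearIndependent_iff.1 hli c (funext fun y => ?_) i
      simpa [domRestrict_apply, Finset.sum_apply] using hc y y.2
    rw [star_trivial, dotProduct_weightedGram_mulVec hφ hk]
    refine Continuous.intervalIntegral_pos_of_nonneg_of_pos (by fun_prop) (fun y hy => ?_) hy₀ ?_
    · exact mul_nonneg (hφpos y hy).le (sq_nonneg _)
    · exact mul_pos (hφpos y₀ hy₀) (by positivity)

end WeightedGram

theorem moment_map_surjective_general (h : ℝ) (hh : 0 < h) (M : ℕ)
    (a : Fin M → Fin 3 → ℝ) :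
    ∃ W : ℝ → ℝ, ContDiff ℝ 2 W ∧
      W 0 = 0 ∧ W h = 0 ∧ deriv W 0 = 0 ∧ deriv W h = 0 ∧
      ∀ m : Fin M, ∀ p : Fin 3,
        (∫ y in (0:ℝ)..h, y ^ (p : ℕ) * Real.exp (-((m : ℕ) + 1) * y) * W y)
          = a m p := by
  let k : Fin M × Fin 3 → ℝ → ℝ := fun i y => y ^ (i.2 : ℕ) * exp (-(((i.1 : ℕ) : ℝ) + 1) * y)
  let φ : ℝ → ℝ := fun y => (y * (h - y)) ^ 2
  have hk : ∀ i, Continuous (k i) := fun i => by fun_prop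
  have hr : Function.Injective fun m : Fin M => -(((m : ℕ) : ℝ) + 1) :=
    fun m m' hmm' => Fin.ext (by simpa using hmm')
  have hli : LinearIndependent ℝ fun i => (Ioo 0 h).domRestrict (k i) :=
    (linearIndependent_pow_mul_exp hr 3).domRestrict_of_analyticOnNhd
      (fun i y _ => by fun_prop) isOpen_Ioo (nonempty_Ioo.2 hh)
  have hG : (weightedGram 0 h φ k).PosDef :=
    posDef_weightedGram (by fun_prop)
      (fun y hy => pow_pos (mul_pos hy.1 (sub_pos.2 hy.2)) 2) hk hli
  obtain ⟨c, hc⟩ := Matrix.mulVec_surjective_iff_isUnit.2 hG.isUnit fun i => a i.1 i.2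
  have hg : Differentiable ℝ fun y => ∑ i, c i * k i y := by fun_prop
  refine ⟨fun y => φ y * ∑ i, c i * k i y, by fun_prop, by simp [φ], by simp [φ],
    deriv_fun_sq_mul_eq_zero (by fun_prop) (hg 0) (by simp),
    deriv_fun_sq_mul_eq_zero (by fun_prop) (hg h) (by simp), fun m p => ?_⟩
  exact (weightedGram_mulVec (by fun_prop) hk c (m, p)).symm.trans (congrFun hc (m, p))

/-- Surjectivity of the moment map: for any targets a_{m,p} there is a C²
function W on [0,h] vanishing with its derivative at both endpoints whose
moments ∫_0^h y^p e^{-my} W(y) dy equal the a_{m,p}. -/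
theorem moment_map_surjective (h : ℝ) (hh : 0 < h) (M : ℕ) (hM : 0 < M)
    (a : Fin M → Fin 3 → ℝ) :
    ∃ W : ℝ → ℝ, ContDiff ℝ 2 W ∧
      W 0 = 0 ∧ W h = 0 ∧ deriv W 0 = 0 ∧ deriv W h = 0 ∧
      ∀ m : Fin M, ∀ p : Fin 3,
        (∫ y in (0:ℝ)..h, y ^ (p : ℕ) * Real.exp (-((m : ℕ) + 1) * y) * W y)
          = a m p :=
  moment_map_surjective_general h hh M a
end

section
/- Let Q : ℝⁿ → ℝⁿ be a C¹ vector field on the closed unit ball B̄ⁿ with sup norm of its derivative strictly less than 1, and suppose Q(q)·q < 0 for all q with |q| = 1. Then for every initial condition q₀ ∈ B̄ⁿ, the solution of dq/dt = Q(q) exists for all t ≥ 0 and remains in B̄ⁿ, i.e., the ODE defines a global semiflow on the closed unit ball. -/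
/-!
Extend `Q` outside the ball by `x ↦ Q (x / max 1 ‖x‖)`. A C¹ field is Lipschitz and bounded on
the compact ball and the radial retraction is Lipschitz, so the extension is globally Lipschitz
and bounded; Picard–Lindelöf on the intervals `(-(m + 1), m + 1)`, glued by uniqueness, then gives
a solution for all times. Along it `‖q‖²` has derivative `2 ⟪Q q, q⟫ < 0` whenever `‖q‖ = 1`, so
it never crosses `1`: the solution stays in the ball, where the extension agrees with `Q`.
-/

open Set Metric
open scoped RealInnerProductSpace NNReal Topology

section RadialRetraction

variable {E : Type*} [NormedAddCommGroup E] [NormedSpace ℝ E]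

noncomputable def radialRetraction (x : E) : E := (max 1 ‖x‖)⁻¹ • x

lemma radialRetraction_of_norm_le {x : E} (hx : ‖x‖ ≤ 1) : radialRetraction x = x := by
  simp [radialRetraction, max_eq_left hx]

lemma norm_radialRetraction_le (x : E) : ‖radialRetraction x‖ ≤ 1 := by
  rw [radialRetraction, norm_smul, norm_inv, Real.norm_of_nonneg (by positivity), inv_mul_le_one₀
    (by positivity)]
  exact le_max_right _ _

lemma radialRetraction_mem_closedBall (x : E) : radialRetraction x ∈ closedBall (0 : E) 1 :=
  mem_closedBall_zero_iff.mpr (norm_radialRetraction_le x)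

lemma lipschitzWith_radialRetraction : LipschitzWith 2 (radialRetraction : E → E) := by
  refine LipschitzWith.of_dist_le_mul fun x y => ?_
  set mx := max 1 ‖x‖
  set my := max 1 ‖y‖
  have hmx : 1 ≤ mx := le_max_left _ _
  have hmy : 1 ≤ my := le_max_left _ _
  have hmxy : |mx - my| ≤ ‖x - y‖ := by
    simpa only [mx, my, max_comm (1 : ℝ)] using
      (abs_max_sub_max_le_abs ‖x‖ ‖y‖ 1).trans (abs_norm_sub_norm_le x y)
  have hsplit : radialRetraction x - radialRetraction y = mx⁻¹ • (x - y) + (mx⁻¹ - my⁻¹) • y := by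
    simp only [radialRetraction, smul_sub, sub_smul]; abel
  have h₁ : ‖mx⁻¹ • (x - y)‖ ≤ ‖x - y‖ := by
    rw [norm_smul, Real.norm_of_nonneg (by positivity)]
    exact mul_le_of_le_one_left (norm_nonneg _) (inv_le_one_of_one_le₀ hmx)
  have h₂ : ‖(mx⁻¹ - my⁻¹) • y‖ ≤ ‖x - y‖ := by
    rw [norm_smul, Real.norm_eq_abs, inv_sub_inv (by positivity) (by positivity), abs_div,
      abs_of_pos (by positivity : 0 < mx * my), abs_sub_comm, div_mul_eq_mul_div,
      div_le_iff₀ (by positivity)]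
    calc |mx - my| * ‖y‖ ≤ ‖x - y‖ * my := by
          gcongr; exact le_max_right _ _
      _ ≤ ‖x - y‖ * (mx * my) := by
          gcongr; exact le_mul_of_one_le_left (by positivity) hmx
  rw [dist_eq_norm, dist_eq_norm, hsplit, NNReal.coe_ofNat]
  linarith [norm_add_le (mx⁻¹ • (x - y)) ((mx⁻¹ - my⁻¹) • y)]

lemma LipschitzOnWith.comp_radialRetraction {F : Type*} [PseudoMetricSpace F] {f : E → F}
    {K : ℝ≥0} (hf : LipschitzOnWith K f (closedBall 0 1)) :
    LipschitzWith (K * 2) (f ∘ radialRetraction) :=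
  lipschitzOnWith_univ.mp <| hf.comp lipschitzWith_radialRetraction.lipschitzOnWith
    fun x _ => radialRetraction_mem_closedBall x

end RadialRetraction

section GlobalExistence

variable {E : Type*} [NormedAddCommGroup E] [NormedSpace ℝ E] [CompleteSpace E]
  {V : E → E} {K L : ℝ≥0}

theorem exists_forall_mem_Ioo_hasDerivAt_of_lipschitzWith (hV : LipschitzWith K V)
    (hL : ∀ x, ‖V x‖ ≤ L) (x₀ : E) {T : ℝ} (hT : 0 ≤ T) :
    ∃ α : ℝ → E, α 0 = x₀ ∧ ∀ t ∈ Ioo (-T) T, HasDerivAt α (V (α t)) t := by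
  have hpl : IsPicardLindelof (fun _ => V) (tmin := -T) (tmax := T)
      ⟨0, by constructor <;> linarith⟩ x₀ (L * T.toNNReal) 0 L K :=
    .of_time_independent (fun x _ => hL x) hV.lipschitzOnWith (by simp [hT])
  obtain ⟨α, hα₀, hα⟩ := hpl.exists_eq_forall_mem_Icc_hasDerivWithinAt₀
  exact ⟨α, hα₀, fun t ht =>
    (hα t (Ioo_subset_Icc_self ht)).hasDerivAt (Icc_mem_nhds ht.1 ht.2)⟩

theorem exists_forall_hasDerivAt_of_lipschitzWith (hV : LipschitzWith K V)
    (hL : ∀ x, ‖V x‖ ≤ L) (x₀ : E) :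
    ∃ α : ℝ → E, α 0 = x₀ ∧ ∀ t, HasDerivAt α (V (α t)) t := by
  choose α hα₀ hα using fun m : ℕ =>
    exists_forall_mem_Ioo_hasDerivAt_of_lipschitzWith hV hL x₀ (T := m + 1) (by positivity)
  have hagree {k m : ℕ} (hkm : k ≤ m) : EqOn (α k) (α m) (Ioo (-(k + 1 : ℝ)) (k + 1)) := by
    have hsub : Ioo (-(k + 1 : ℝ)) (k + 1) ⊆ Ioo (-(m + 1 : ℝ)) (m + 1) := by
      have : (k : ℝ) ≤ m := by exact_mod_cast hkm
      exact Ioo_subset_Ioo (by linarith) (by linarith)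
    exact ODE_solution_unique_of_mem_Ioo (v := fun _ => V) (s := fun _ => univ) (t₀ := 0)
      (fun _ _ => hV.lipschitzOnWith) (by constructor <;> linarith [(k.cast_nonneg : (0 : ℝ) ≤ k)])
      (fun t ht => ⟨hα k t ht, mem_univ _⟩) (fun t ht => ⟨hα m t (hsub ht), mem_univ _⟩)
      (by rw [hα₀, hα₀])
  have hglue (m : ℕ) {t : ℝ} (ht : |t| < m + 1) : α ⌊|t|⌋₊ t = α m t := by
    refine hagree ?_ (abs_lt.mp (Nat.lt_floor_add_one |t|))
    exact Nat.lt_succ_iff.mp ((Nat.floor_lt (abs_nonneg t)).mpr (by exact_mod_cast ht))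
  refine ⟨fun t => α ⌊|t|⌋₊ t, by simpa using hα₀ 0, fun t => ?_⟩
  have hnear : (fun s => α ⌊|s|⌋₊ s) =ᶠ[𝓝 t] α ⌊|t|⌋₊ :=
    (isOpen_lt continuous_abs continuous_const).eventually_mem (Nat.lt_floor_add_one |t|)
      |>.mono fun s hs => hglue _ hs
  exact (hα _ t (abs_lt.mp (Nat.lt_floor_add_one |t|))).congr_of_eventuallyEq hnear

end GlobalExistence

section Invariance

variable {F : Type*} [NormedAddCommGroup F] [InnerProductSpace ℝ F]

theorem norm_le_of_hasDerivAt_of_inner_neg {g : ℝ → F} {V : F → F} {r : ℝ}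
    (hg : ∀ t, 0 ≤ t → HasDerivAt g (V (g t)) t) (hV : ∀ x, ‖x‖ = r → ⟪V x, x⟫ < 0)
    (h₀ : ‖g 0‖ ≤ r) {t : ℝ} (ht : 0 ≤ t) : ‖g t‖ ≤ r := by
  have hr : 0 ≤ r := (norm_nonneg _).trans h₀
  have hsq : ‖g t‖ ^ 2 ≤ r ^ 2 :=
    image_le_of_deriv_right_lt_deriv_boundary (B := fun _ => r ^ 2) (B' := fun _ => 0)
      (fun s hs => (hg s hs.1).norm_sq.continuousAt.continuousWithinAt)
      (fun s hs => (hg s hs.1).norm_sq.hasDerivWithinAt) (by gcongr)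
      (fun _ => hasDerivAt_const _ _)
      (fun s _ hs => by
        rw [sq_eq_sq₀ (norm_nonneg _) hr] at hs
        rw [real_inner_comm]
        linarith [hV _ hs])
      ⟨ht, le_rfl⟩
  exact (sq_le_sq₀ (norm_nonneg _) hr).mp hsq

end Invariance

theorem global_semiflow_on_ball_general (n : ℕ)
    (Q : EuclideanSpace ℝ (Fin n) → EuclideanSpace ℝ (Fin n))
    (hQ : ContDiff ℝ 1 Q)
    (hinward : ∀ q, ‖q‖ = 1 → (inner ℝ (Q q) q : ℝ) < 0) :
    ∀ q₀ : EuclideanSpace ℝ (Fin n), ‖q₀‖ ≤ 1 →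
      ∃ q : ℝ → EuclideanSpace ℝ (Fin n), q 0 = q₀ ∧
        ∀ t : ℝ, 0 ≤ t → HasDerivAt q (Q (q t)) t ∧ ‖q t‖ ≤ 1 := by
  intro q₀ hq₀
  obtain ⟨K, hK⟩ := hQ.locallyLipschitz.locallyLipschitzOn.exists_lipschitzOnWith_of_compact
    (isCompact_closedBall 0 1)
  obtain ⟨C, hC⟩ := (isCompact_closedBall (0 : EuclideanSpace ℝ (Fin n)) 1)
    |>.exists_bound_of_continuousOn hQ.continuous.continuousOn
  have hQ_retract (x) (hx : ‖x‖ ≤ 1) : Q (radialRetraction x) = Q x :=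
    congrArg Q (radialRetraction_of_norm_le hx)
  obtain ⟨q, hq_zero, hq⟩ := exists_forall_hasDerivAt_of_lipschitzWith (L := C.toNNReal)
    hK.comp_radialRetraction
    (fun x => (hC _ (radialRetraction_mem_closedBall x)).trans (Real.le_coe_toNNReal C)) q₀
  have hball (t) (ht : 0 ≤ t) : ‖q t‖ ≤ 1 :=
    norm_le_of_hasDerivAt_of_inner_neg (fun s _ => hq s)
      (fun x hx => by simpa only [Function.comp_apply, hQ_retract x hx.le] using hinward x hx)
      (hq_zero ▸ hq₀) ht
  exact ⟨q, hq_zero, fun t ht => ⟨hQ_retract _ (hball t ht) ▸ hq t, hball t ht⟩⟩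

/-- A C¹ vector field on ℝⁿ whose derivative is bounded by 1 in norm on the
closed unit ball and which points strictly inward on the unit sphere generates
a global semiflow on the closed unit ball: every solution starting in the ball
exists for all t ≥ 0 and stays in the ball. -/
theorem global_semiflow_on_ball (n : ℕ)
    (Q : EuclideanSpace ℝ (Fin n) → EuclideanSpace ℝ (Fin n))
    (hQ : ContDiff ℝ 1 Q)
    (hgrad : ∀ q, ‖q‖ ≤ 1 → ‖fderiv ℝ Q q‖ < 1)
    (hinward : ∀ q, ‖q‖ = 1 → (inner ℝ (Q q) q : ℝ) < 0) :
    ∀ q₀ : EuclideanSpace ℝ (Fin n), ‖q₀‖ ≤ 1 →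
      ∃ q : ℝ → EuclideanSpace ℝ (Fin n), q 0 = q₀ ∧
        ∀ t : ℝ, 0 ≤ t → HasDerivAt q (Q (q t)) t ∧ ‖q t‖ ≤ 1 :=
  global_semiflow_on_ball_general n Q hQ hinward
end
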